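/- Let Γ ∈ ℝ and let δf : ℝ → ℂ be a continuously differentiable function, not identically zero, such that the function λ(p) = δf′(p) + β v(p) δf(p) is differentiable and satisfies the mode equation Γ (1 − v(p) V) δf(p) = (1/(β² 𝔇 γ)) λ′(p) for all p ∈ ℝ. Assume that p ↦ exp(β ε(p)) |δf(p)|² and p ↦ exp(β ε(p)) |λ(p)|² are integrable over ℝ, and that exp(β ε(p)) · conj(δf(p)) · λ(p) → 0 as p → ±∞. Then Γ · ∫_ℝ (1 − v(p) V) exp(β ε(p)) |δf(p)|² dp = −(1/(β² 𝔇 γ)) · ∫_ℝ exp(β ε(p)) |λ(p)|² dp, and consequently Γ ≤ 0. -/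

import Mathlib

open MeasureTheory Filter

/-- Relativistic energy `ε(p) = √(m² + p²)`. -/
noncomputable def eps (m p : ℝ) : ℝ := Real.sqrt (m ^ 2 + p ^ 2)

/-- Relativistic velocity `v(p) = p/ε(p)`. -/
noncomputable def vel (m p : ℝ) : ℝ := p / eps m p

/-
Because `(e^{βε})' = β v e^{βε}` and `λ = δf' + β v δf`, the flux `F = e^{βε} · conj δf · λ` has
derivative `e^{βε} |λ|² + e^{βε} · conj δf · λ'`, and the mode equation turns the second term into
`Γ β²𝔇γ (1 − vV) e^{βε} |δf|²`. Integrating over ℝ, the decay of `F` at `±∞` gives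
`∫ e^{βε} |λ|² + Γ β²𝔇γ ∫ (1 − vV) e^{βε} |δf|² = 0`. As `|v V| < 1`, the second integral is
strictly positive for `δf ≠ 0` and the first is nonnegative, so `Γ ≤ 0`.
-/

lemma hasDerivAt_weight_mul_conj_mul {E a : ℝ → ℝ} {f l : ℝ → ℂ} {f' l' : ℂ} {p : ℝ}
    (hE : HasDerivAt E (a p * E p) p) (hf : HasDerivAt f f' p) (hl : HasDerivAt l l' p)
    (hlf : l p = f' + (a p : ℂ) * f p) :
    HasDerivAt (fun q => (E q : ℂ) * starRingEnd ℂ (f q) * l q)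
      (↑(E p * ‖l p‖ ^ 2) + E p * starRingEnd ℂ (f p) * l') p := by
  have hf' : starRingEnd ℂ f' = starRingEnd ℂ (l p) - a p * starRingEnd ℂ (f p) := by
    rw [hlf, map_add, map_mul, Complex.conj_ofReal]
    ring
  have hl2 : ((‖l p‖ ^ 2 : ℝ) : ℂ) = l p * starRingEnd ℂ (l p) := by
    rw [Complex.mul_conj']
    push_cast
    rfl
  refine ((hE.ofReal_comp.mul hf.star).mul hl).congr_deriv ?_
  simp only [Pi.mul_apply, Complex.ofReal_mul, hl2, Complex.star_def, hf']
  ring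

section Kinematics

variable {m : ℝ}

lemma eps_pos (hm : 0 < m) (p : ℝ) : 0 < eps m p :=
  Real.sqrt_pos.mpr (by positivity)

lemma hasDerivAt_eps (hm : 0 < m) (p : ℝ) : HasDerivAt (eps m) (vel m p) p := by
  have hsq : HasDerivAt (fun q : ℝ => m ^ 2 + q ^ 2) (2 * p) p := by
    simpa using (hasDerivAt_pow 2 p).const_add (m ^ 2)
  refine ((Real.hasDerivAt_sqrt (by positivity)).comp p hsq).congr_deriv ?_
  have := eps_pos hm p
  rw [vel, eps]
  field_simp

lemma hasDerivAt_exp_mul_eps (hm : 0 < m) (β p : ℝ) :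
    HasDerivAt (fun q => Real.exp (β * eps m q)) (β * vel m p * Real.exp (β * eps m p)) p :=
  ((hasDerivAt_eps hm p).const_mul β).exp.congr_deriv (mul_comm _ _)

lemma continuous_eps : Continuous (eps m) := by
  unfold eps
  fun_prop

lemma continuous_vel (hm : 0 < m) : Continuous (vel m) :=
  continuous_id.div continuous_eps fun p => (eps_pos hm p).ne'

lemma abs_vel_lt_one (hm : 0 < m) (p : ℝ) : |vel m p| < 1 := by
  have he := eps_pos hm p
  rw [vel, abs_div, abs_of_pos he, div_lt_one he, ← Real.sqrt_sq_eq_abs, eps]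
  exact Real.sqrt_lt_sqrt (by positivity) (by nlinarith)

variable {V : ℝ}

lemma abs_vel_mul_lt_one (hm : 0 < m) (hV : |V| < 1) (p : ℝ) : |vel m p * V| < 1 := by
  rw [abs_mul]
  nlinarith [abs_vel_lt_one hm p, abs_nonneg (vel m p), abs_nonneg V]

lemma one_sub_vel_mul_pos (hm : 0 < m) (hV : |V| < 1) (p : ℝ) : 0 < 1 - vel m p * V := by
  linarith [le_abs_self (vel m p * V), abs_vel_mul_lt_one hm hV p]

lemma integrable_one_sub_vel_mul (hm : 0 < m) (hV : |V| < 1) {g : ℝ → ℝ} (hg : Integrable g) :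
    Integrable fun p => (1 - vel m p * V) * g p := by
  have hmeas : Continuous fun p => 1 - vel m p * V := by
    have := continuous_vel hm
    fun_prop
  refine hg.bdd_mul (c := 2) hmeas.aestronglyMeasurable ?_
  refine Eventually.of_forall fun p => ?_
  rw [Real.norm_eq_abs]
  linarith [abs_sub (1 : ℝ) (vel m p * V), abs_vel_mul_lt_one hm hV p, abs_one (α := ℝ)]

end Kinematics

lemma mode_energy_balance {m β V c : ℝ} (hm : 0 < m) {δf lam : ℝ → ℂ}
    (hδf : Differentiable ℝ δf) (hlam : ∀ p, lam p = deriv δf p + ↑(β * vel m p) * δf p)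
    (hlamdiff : Differentiable ℝ lam)
    (hmode : ∀ p, deriv lam p = ↑(c * (1 - vel m p * V)) * δf p)
    (hint1 : Integrable fun p => (1 - vel m p * V) * Real.exp (β * eps m p) * ‖δf p‖ ^ 2)
    (hint2 : Integrable fun p => Real.exp (β * eps m p) * ‖lam p‖ ^ 2)
    (hdecayTop : Tendsto (fun p =>
      ↑(Real.exp (β * eps m p)) * starRingEnd ℂ (δf p) * lam p) atTop (nhds 0))
    (hdecayBot : Tendsto (fun p =>
      ↑(Real.exp (β * eps m p)) * starRingEnd ℂ (δf p) * lam p) atBot (nhds 0)) :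
    (∫ p, Real.exp (β * eps m p) * ‖lam p‖ ^ 2)
      + c * ∫ p, (1 - vel m p * V) * Real.exp (β * eps m p) * ‖δf p‖ ^ 2 = 0 := by
  have hderiv : ∀ p, HasDerivAt (fun q => ↑(Real.exp (β * eps m q)) * starRingEnd ℂ (δf q) * lam q)
      ((Real.exp (β * eps m p) * ‖lam p‖ ^ 2
        + c * ((1 - vel m p * V) * Real.exp (β * eps m p) * ‖δf p‖ ^ 2) : ℝ) : ℂ) p := by
    intro p
    refine (hasDerivAt_weight_mul_conj_mul (a := fun q => β * vel m q)
      (hasDerivAt_exp_mul_eps hm β p) (hδf p).hasDerivAt (hlamdiff p).hasDerivAt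
      (hlam p)).congr_deriv ?_
    rw [hmode p]
    push_cast
    rw [← Complex.conj_mul' (δf p)]
    ring
  have hflux := integral_of_hasDerivAt_of_tendsto hderiv (hint2.add (hint1.const_mul c)).ofReal
    hdecayBot hdecayTop
  rw [sub_self, integral_complex_ofReal, Complex.ofReal_eq_zero] at hflux
  rw [← integral_const_mul, ← integral_add hint2 (hint1.const_mul c)]
  exact hflux

lemma integral_one_sub_vel_mul_exp_mul_sq_norm_pos {m β V : ℝ} (hm : 0 < m) (hV : |V| < 1)
    {f : ℝ → ℂ} (hf : Continuous f) (hne : ∃ p, f p ≠ 0)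
    (hint : Integrable fun p => (1 - vel m p * V) * Real.exp (β * eps m p) * ‖f p‖ ^ 2) :
    0 < ∫ p, (1 - vel m p * V) * Real.exp (β * eps m p) * ‖f p‖ ^ 2 := by
  obtain ⟨p₀, hp₀⟩ := hne
  refine integral_pos_of_integrable_nonneg_nonzero (x := p₀) ?_ hint (fun p => ?_) ?_
  · have := continuous_vel hm
    have := continuous_eps (m := m)
    fun_prop
  · have := one_sub_vel_mul_pos hm hV p
    positivity
  · have := one_sub_vel_mul_pos hm hV p₀
    positivity

theorem boosted_mode_stable_general (m β D : ℝ) (hm : 0 < m) (hβ : 0 < β) (hD : 0 < D)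
    (V : ℝ) (hV1 : |V| < 1)
    (γ : ℝ) (hγ : γ = 1 / Real.sqrt (1 - V ^ 2))
    (Γ : ℝ) (δf : ℝ → ℂ) (hC1 : ContDiff ℝ 1 δf)
    (hne : ∃ p : ℝ, δf p ≠ 0)
    (lam : ℝ → ℂ)
    (hlam : ∀ p : ℝ, lam p = deriv δf p + ↑(β * vel m p) * δf p)
    (hlamdiff : Differentiable ℝ lam)
    (hmode : ∀ p : ℝ, (↑Γ : ℂ) * (1 - ↑(vel m p * V)) * δf p
      = ((1 / (β ^ 2 * D * γ) : ℝ) : ℂ) * deriv lam p)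
    (hint1 : Integrable (fun p : ℝ => Real.exp (β * eps m p) * ‖δf p‖ ^ 2))
    (hint2 : Integrable (fun p : ℝ => Real.exp (β * eps m p) * ‖lam p‖ ^ 2))
    (hdecayTop : Tendsto (fun p : ℝ =>
      ↑(Real.exp (β * eps m p)) * (starRingEnd ℂ) (δf p) * lam p) atTop (nhds 0))
    (hdecayBot : Tendsto (fun p : ℝ =>
      ↑(Real.exp (β * eps m p)) * (starRingEnd ℂ) (δf p) * lam p) atBot (nhds 0)) :
    Γ * (∫ p : ℝ, (1 - vel m p * V) * Real.exp (β * eps m p) * ‖δf p‖ ^ 2)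
      = -(1 / (β ^ 2 * D * γ)) * ∫ p : ℝ, Real.exp (β * eps m p) * ‖lam p‖ ^ 2 ∧
    Γ ≤ 0 := by
  have hγ0 : 0 < γ := by
    have : 0 < 1 - V ^ 2 := by nlinarith [sq_abs V, abs_nonneg V]
    rw [hγ]
    positivity
  have hk : 0 < β ^ 2 * D * γ := by positivity
  have hlam' (p : ℝ) :
      deriv lam p = ((Γ * (β ^ 2 * D * γ) * (1 - vel m p * V) : ℝ) : ℂ) * δf p := by
    have hkc : ((β ^ 2 * D * γ : ℝ) : ℂ) ≠ 0 := by exact_mod_cast hk.ne'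
    have h := hmode p
    rw [one_div, Complex.ofReal_inv, ← div_eq_inv_mul, eq_div_iff hkc] at h
    push_cast at h ⊢
    linear_combination -h
  have hint1' : Integrable fun p => (1 - vel m p * V) * Real.exp (β * eps m p) * ‖δf p‖ ^ 2 := by
    simpa only [mul_assoc] using integrable_one_sub_vel_mul hm hV1 hint1
  have hbalance := mode_energy_balance hm (hC1.differentiable one_ne_zero) hlam hlamdiff hlam'
    hint1' hint2 hdecayTop hdecayBot
  have hI := integral_one_sub_vel_mul_exp_mul_sq_norm_pos hm hV1 hC1.continuous hne hint1'
  have hJ : 0 ≤ ∫ p, Real.exp (β * eps m p) * ‖lam p‖ ^ 2 :=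
    integral_nonneg fun p => by positivity
  constructor
  · field_simp
    linear_combination hbalance
  · nlinarith [mul_pos hk hI]

/-- for a boosted homogeneous mode of the relativistic Vlasov–Fokker–Planck
equation, with `λ(p) = δf′(p) + β v(p) δf(p)` and mode equation
`Γ (1 − v V) δf = (β²𝔇γ)⁻¹ λ′`, under integrability and decay assumptions one has
`Γ ∫ (1 − v V) e^{βε} |δf|² = −(β²𝔇γ)⁻¹ ∫ e^{βε} |λ|²`, and consequently `Γ ≤ 0`. -/
theorem boosted_mode_stable (m β D : ℝ) (hm : 0 < m) (hβ : 0 < β) (hD : 0 < D)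
    (V : ℝ) (hV0 : 0 < |V|) (hV1 : |V| < 1)
    (γ : ℝ) (hγ : γ = 1 / Real.sqrt (1 - V ^ 2))
    (Γ : ℝ) (δf : ℝ → ℂ) (hC1 : ContDiff ℝ 1 δf)
    (hne : ∃ p : ℝ, δf p ≠ 0)
    (lam : ℝ → ℂ)
    (hlam : ∀ p : ℝ, lam p = deriv δf p + ↑(β * vel m p) * δf p)
    (hlamdiff : Differentiable ℝ lam)
    (hmode : ∀ p : ℝ, (↑Γ : ℂ) * (1 - ↑(vel m p * V)) * δf p
      = ((1 / (β ^ 2 * D * γ) : ℝ) : ℂ) * deriv lam p)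
    (hint1 : Integrable (fun p : ℝ => Real.exp (β * eps m p) * ‖δf p‖ ^ 2))
    (hint2 : Integrable (fun p : ℝ => Real.exp (β * eps m p) * ‖lam p‖ ^ 2))
    (hdecayTop : Tendsto (fun p : ℝ =>
      ↑(Real.exp (β * eps m p)) * (starRingEnd ℂ) (δf p) * lam p) atTop (nhds 0))
    (hdecayBot : Tendsto (fun p : ℝ =>
      ↑(Real.exp (β * eps m p)) * (starRingEnd ℂ) (δf p) * lam p) atBot (nhds 0)) :
    Γ * (∫ p : ℝ, (1 - vel m p * V) * Real.exp (β * eps m p) * ‖δf p‖ ^ 2)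
      = -(1 / (β ^ 2 * D * γ)) * ∫ p : ℝ, Real.exp (β * eps m p) * ‖lam p‖ ^ 2 ∧
    Γ ≤ 0 :=
  boosted_mode_stable_general m β D hm hβ hD V hV1 γ hγ Γ δf hC1 hne lam hlam hlamdiff hmode hint1
    hint2 hdecayTop hdecayBot
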